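/- arXiv:2001.04887 — 2 statements merged into one kernel-verified Lean document; each statement's English description precedes it below -/
import Mathlib

section
/- Let S be a stabilizer group on n qubits with 2^r elements ε_j E(a_j, b_j) (ε_j ∈ {±1}, j = 1,…,2^r). Suppose: (1) for every j, w_H(a_j) is even; and (2) for every j with a_j ≠ 0 there exists a linear subspace A_j ⊆ F_2^n with dim A_j = w_H(a_j)/2 such that every z ∈ A_j satisfies z ⪯ a_j, y z^T = 0 for all y, z ∈ A_j (including y = z), and i^{w_H(z)} E(0,z) ∈ S for every z ∈ A_j. Then T^{⊗n} Π_S (T^{⊗n})† = Π_S, i.e., transversal T preserves the code space V(S) and hence induces a logical operation on it. -/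
/-! Conjugation by `T^{⊗n}` multiplies the `(u, v)` entry of `Π_S` by `e^{iπ(w_H(u) - w_H(v))/4}`,
so it suffices that `w_H(u) ≡ w_H(v) mod 8` whenever that entry is nonzero. Such an entry comes
from some `±E(a,b) ∈ S` with `v = u + a`, and `w_H(v) = w_H(u) + w_H(a) - 2 w_H(a * u)`.

Every `i^{w_H(z)} E(0,z)`, `z ∈ A`, is an involution in `S`, hence fixes `Π_S`; as it is diagonal,
its entry at `u` is `1`. So `u` lies in the set of `x` on which the character
`z ↦ i^{w_H(z)} (-1)^{z·x}` of the self-orthogonal code `A` is trivial, and so does `a * u`.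
Summing `t^{w_H(x)}` over the `x ⪯ a` in that set and evaluating with the weight enumerator
`∑_{x ⪯ a} t^{w_H(x)} (-1)^{z·x} = (1+t)^{w_H(a+z)} (1-t)^{w_H(z)}` at `t = 1` and `t = i` shows
that the set has `2^k` elements (`k = dim A`, `w_H(a) = 2k`) and that the `i^{w_H(x)}` over it add
up to `2^k i^k`. Being unit complex numbers, they all equal `i^k`; hence
`w_H(a * u) ≡ k mod 4` and `2 w_H(a * u) ≡ w_H(a) mod 8`.
-/

open Matrix BigOperators

section Binary

variable {ι : Type*} [Fintype ι] [DecidableEq ι]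

/-- Hamming weight of a binary vector. -/
def wH (x : ι → ZMod 2) : ℕ := (Finset.univ.filter fun j => x j = 1).card

/-- `supportLE y x` means `supp(y) ⊆ supp(x)`, i.e. `y ⪯ x`. -/
def supportLE (y x : ι → ZMod 2) : Prop := ∀ j, y j = 1 → x j = 1

instance (x : ι → ZMod 2) : DecidablePred (fun y : ι → ZMod 2 => supportLE y x) :=
  fun _ => inferInstanceAs (Decidable (∀ j, _ = 1 → x j = 1))

/-- The mod-2 inner product `x yᵀ = ∑ j, x j * y j`. -/
def binInner (x y : ι → ZMod 2) : ZMod 2 := ∑ j, x j * y j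

/-- The dual code `C^⊥ = {y : x yᵀ = 0 for all x ∈ C}`. -/
def dualCode (C : Submodule (ZMod 2) (ι → ZMod 2)) : Submodule (ZMod 2) (ι → ZMod 2) where
  carrier := { y | ∀ x ∈ C, binInner x y = 0 }
  add_mem' := by
    intro a b ha hb x hx
    have h : binInner x (a + b) = binInner x a + binInner x b := by
      simp [binInner, mul_add, Finset.sum_add_distrib]
    rw [h, ha x hx, hb x hx, add_zero]
  zero_mem' := by
    intro x hx
    simp [binInner]
  smul_mem' := by
    intro c a ha x hx
    have h : binInner x (c • a) = c * binInner x a := by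
      simp only [binInner, Pi.smul_apply, smul_eq_mul, Finset.mul_sum]
      exact Finset.sum_congr rfl fun j _ => by ring
    rw [h, ha x hx, mul_zero]

/-- A CSS-T pair of binary linear codes: `C₂ ⊆ C₁`, every codeword of `C₂` has even
weight, and for each `x ∈ C₂` there is a self-dual code in `C₁^⊥`, of dimension
`w_H(x)/2`, supported on `x`. -/
def CSST (C₁ C₂ : Submodule (ZMod 2) (ι → ZMod 2)) : Prop :=
  C₂ ≤ C₁ ∧
  (∀ x ∈ C₂, Even (wH x)) ∧
  (∀ x ∈ C₂, ∃ Cx : Submodule (ZMod 2) (ι → ZMod 2),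
    Cx ≤ dualCode C₁ ∧
    2 * Module.finrank (ZMod 2) Cx = wH x ∧
    (∀ z ∈ Cx, supportLE z x) ∧
    (∀ y ∈ Cx, ∀ z ∈ Cx, binInner y z = 0))

/-- A family of rows is triorthogonal if all pairs and triples of distinct rows have
even overlap. -/
def Triorthogonal {p : ℕ} (g : Fin p → ι → ZMod 2) : Prop :=
  (∀ a b : Fin p, a < b → Even (wH (g a * g b))) ∧
  (∀ a b c : Fin p, a < b → b < c → Even (wH (g a * g b * g c)))

end Binary

/-- Binary vectors of length `n`. -/
abbrev V (n : ℕ) := Fin n → ZMod 2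

/-- The Hermitian `n`-qubit Pauli matrix
`E(a,b) = ⊗_j i^{a_j b_j} X^{a_j} Z^{b_j}`, written entrywise:
`E(a,b)[u,v] = i^{∑ a_j b_j} · 1[u = v ⊕ a] · (−1)^{∑ b_j v_j}`. -/
def PauliE {n : ℕ} (a b : V n) : Matrix (V n) (V n) ℂ :=
  Matrix.of fun u v =>
    Complex.I ^ (∑ j, (a j).val * (b j).val) *
      (if u = v + a then 1 else 0) *
      (-1 : ℂ) ^ (∑ j, (b j).val * (v j).val)

/-- The transversal `T` gate `T^{⊗n}`, where `T = diag(1, e^{iπ/4})`; it is the diagonal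
matrix whose entry at `v` is `e^{iπ w_H(v)/4}`. -/
noncomputable def transT (n : ℕ) : Matrix (V n) (V n) ℂ :=
  Matrix.diagonal fun v : V n => Complex.exp ((Real.pi : ℂ) * Complex.I / 4) ^ wH v

/-- `ε` is a sign `±1`. -/
def IsSign (ε : ℂ) : Prop := ε = 1 ∨ ε = -1

/-- A stabilizer group on `n` qubits, given as the finite set of its elements:
each element is `±E(a,b)`, the set is closed under multiplication, abelian,
nonempty (hence contains the identity), and does not contain `−I`. -/
def IsStabilizer (n : ℕ) (S : Finset (Matrix (V n) (V n) ℂ)) : Prop :=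
  S.Nonempty ∧
  (∀ g ∈ S, ∃ (ε : ℂ) (a b : V n), IsSign ε ∧ g = ε • PauliE a b) ∧
  (∀ g ∈ S, ∀ h ∈ S, g * h ∈ S) ∧
  (∀ g ∈ S, ∀ h ∈ S, g * h = h * g) ∧
  (-1 : Matrix (V n) (V n) ℂ) ∉ S

/-- The code projector `Π_S = |S|⁻¹ ∑_{g ∈ S} g  (= 2^{−r} ∑_j ε_j E(a_j,b_j))`. -/
noncomputable def stabProj {n : ℕ} (S : Finset (Matrix (V n) (V n) ℂ)) :
    Matrix (V n) (V n) ℂ :=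
  (S.card : ℂ)⁻¹ • ∑ g ∈ S, g

section Weight

variable {ι : Type*} [Fintype ι]

lemma wH_eq_sum_val (x : ι → ZMod 2) : wH x = ∑ j, (x j).val := by
  rw [wH, Finset.card_filter]
  exact Finset.sum_congr rfl fun j _ => by generalize x j = c; revert c; decide

lemma natCast_wH (x : ι → ZMod 2) : (wH x : ZMod 2) = ∑ j, x j := by
  simp only [wH_eq_sum_val, Nat.cast_sum, ZMod.natCast_zmod_val]

lemma wH_eq_zero_iff {x : ι → ZMod 2} : wH x = 0 ↔ x = 0 := by
  have h : ∀ c : ZMod 2, ¬c = 1 ↔ c = 0 := by decide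
  simp [wH, Finset.filter_eq_empty_iff, h, funext_iff]

lemma wH_add_add_two_mul_wH_mul (x y : ι → ZMod 2) :
    wH (x + y) + 2 * wH (x * y) = wH x + wH y := by
  have h : ∀ c d : ZMod 2, (c + d).val + 2 * (c * d).val = c.val + d.val := by decide
  simp only [wH_eq_sum_val, Finset.mul_sum, ← Finset.sum_add_distrib, Pi.add_apply, Pi.mul_apply, h]

lemma wH_add_add_wH_of_supportLE {z a : ι → ZMod 2} (h : supportLE z a) :
    wH (a + z) + wH z = wH a := by
  have hmul : ∀ c d : ZMod 2, (d = 1 → c = 1) → c * d = d := by decide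
  have := wH_add_add_two_mul_wH_mul a z
  rw [show a * z = z from funext fun j => hmul _ _ (h j)] at this
  omega

lemma even_wH_mul_of_binInner_eq_zero {y z : ι → ZMod 2} (h : binInner y z = 0) :
    Even (wH (y * z)) := by
  rw [← ZMod.natCast_eq_zero_iff_even, natCast_wH]
  exact h

lemma even_wH_of_binInner_self_eq_zero {z : ι → ZMod 2} (h : binInner z z = 0) : Even (wH z) := by
  have hsq : ∀ c : ZMod 2, c * c = c := by decide
  rw [← ZMod.natCast_eq_zero_iff_even, natCast_wH, ← h]
  simp only [binInner, hsq]

end Weight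

lemma sum_zmod_two {M : Type*} [AddCommMonoid M] (f : ZMod 2 → M) : ∑ c, f c = f 0 + f 1 :=
  Fin.sum_univ_two f

section Enumerator

variable {ι : Type*} [Fintype ι] [DecidableEq ι] {R : Type*} [CommRing R]

theorem sum_supportLE_pow_wH_mul_neg_one_pow {a z : ι → ZMod 2} (hz : supportLE z a) (t : R) :
    ∑ x ∈ Finset.univ.filter (supportLE · a), t ^ wH x * (-1) ^ ∑ j, (z j).val * (x j).val
      = (1 + t) ^ wH (a + z) * (1 - t) ^ wH z := by
  have hcoord (c d : ZMod 2) (h : d = 1 → c = 1) :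
      ∑ x : ZMod 2, (if x = 1 → c = 1 then t ^ x.val * (-1) ^ (d.val * x.val) else 0)
        = (1 + t) ^ (c + d).val * (1 - t) ^ d.val := by
    have hcases : ∀ c : ZMod 2, c = 0 ∨ c = 1 := by decide
    have h11 : (1 + 1 : ZMod 2) = 0 := rfl
    rcases hcases c with rfl | rfl <;> rcases hcases d with rfl | rfl <;> clear hcases <;>
      simp_all [sum_zmod_two, ZMod.val_one, sub_eq_add_neg]
  simp only [wH_eq_sum_val, ← Finset.prod_pow_eq_pow_sum, ← Finset.prod_mul_distrib, Pi.add_apply,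
    ← fun j => hcoord (a j) (z j) (hz j), Finset.prod_univ_sum, Finset.prod_ite_zero,
    Fintype.piFinset_univ, Finset.mem_univ, forall_const]
  rw [Finset.sum_filter]
  rfl

end Enumerator

section PhaseCharacter

variable {ι : Type*} [Fintype ι]

lemma neg_one_pow_sum_val_mul_add_left {R : Type*} [CommRing R]
    (y z x : ι → ZMod 2) :
    (-1 : R) ^ ∑ j, ((y + z) j).val * (x j).val
      = (-1) ^ (∑ j, (y j).val * (x j).val) * (-1) ^ ∑ j, (z j).val * (x j).val := by
  have h : ∀ c d e : ZMod 2, ((c + d).val * e.val) % 2 = (c.val * e.val + d.val * e.val) % 2 := by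
    decide
  simp only [← Finset.prod_pow_eq_pow_sum, ← Finset.prod_mul_distrib, ← pow_add]
  refine Finset.prod_congr rfl fun j _ => ?_
  rw [neg_one_pow_eq_pow_mod_two, Pi.add_apply, h, ← neg_one_pow_eq_pow_mod_two]

lemma sum_val_mul_mul_right_of_supportLE {z a : ι → ZMod 2} (h : supportLE z a) (x : ι → ZMod 2) :
    ∑ j, (z j).val * ((a * x) j).val = ∑ j, (z j).val * (x j).val := by
  have hc : ∀ c d e : ZMod 2, (d = 1 → c = 1) → d.val * (c * e).val = d.val * e.val := by decide
  exact Finset.sum_congr rfl fun j _ => hc _ _ _ (h j)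

lemma I_pow_wH_add {y z : ι → ZMod 2} (h : binInner y z = 0) :
    Complex.I ^ wH (y + z) = Complex.I ^ wH y * Complex.I ^ wH z := by
  obtain ⟨m, hm⟩ := even_wH_mul_of_binInner_eq_zero h
  rw [← pow_add, ← wH_add_add_two_mul_wH_mul, hm, pow_add, ← two_mul, ← mul_assoc, pow_mul,
    show (2 * 2 : ℕ) = 4 from rfl, Complex.I_pow_four, one_pow, mul_one]

variable {A : Submodule (ZMod 2) (ι → ZMod 2)}

/-- The diagonal entry at `x` of `i^{w_H(z)} E(0,z)`, as a function of `z ∈ A`. -/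
def phaseChar (horth : ∀ y ∈ A, ∀ z ∈ A, binInner y z = 0) (x : ι → ZMod 2) : AddChar A ℂ where
  toFun z := Complex.I ^ wH (z : ι → ZMod 2) * (-1) ^ ∑ j, ((z : ι → ZMod 2) j).val * (x j).val
  map_zero_eq_one' := by simp [wH_eq_zero_iff.2 rfl]
  map_add_eq_mul' y z := by
    simp only [Submodule.coe_add, I_pow_wH_add (horth y y.2 z z.2),
      neg_one_pow_sum_val_mul_add_left]
    ring

lemma phaseChar_apply (horth : ∀ y ∈ A, ∀ z ∈ A, binInner y z = 0) (x : ι → ZMod 2) (z : A) :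
    phaseChar horth x z
      = Complex.I ^ wH (z : ι → ZMod 2) * (-1) ^ ∑ j, ((z : ι → ZMod 2) j).val * (x j).val := rfl

end PhaseCharacter

theorem Complex.eq_of_sum_eq_card_mul {ι : Type*} {s : Finset ι} {w : ι → ℂ} {c : ℂ}
    (hw : ∀ i ∈ s, ‖w i‖ ≤ 1) (hc : ‖c‖ = 1) (h : ∑ i ∈ s, w i = s.card * c) :
    ∀ i ∈ s, w i = c := by
  have hcc : c * (starRingEnd ℂ) c = 1 := by rw [Complex.mul_conj', hc]; norm_num
  have hnorm : ∀ i ∈ s, ‖w i * (starRingEnd ℂ) c‖ ≤ 1 := fun i hi => by simpa [hc] using hw i hi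
  have hsum : ∑ i ∈ s, (w i * (starRingEnd ℂ) c).re = ∑ i ∈ s, (1 : ℝ) := by
    rw [← Complex.re_sum, ← Finset.sum_mul, h, mul_assoc, hcc]
    simp
  intro i hi
  have hre := (Finset.sum_eq_sum_iff_of_le fun i hi =>
    (Complex.re_le_norm _).trans (hnorm i hi)).1 hsum i hi
  have him : (w i * (starRingEnd ℂ) c).im = 0 := by
    refine Complex.abs_re_eq_norm.1 (le_antisymm (abs_re_le_norm _) ?_)
    rw [hre, abs_one]
    exact hnorm i hi
  have hone : w i * (starRingEnd ℂ) c = 1 := Complex.ext hre him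
  calc w i = w i * (starRingEnd ℂ) c * c := by rw [mul_assoc, mul_comm _ c, hcc, mul_one]
    _ = c := by rw [hone, one_mul]

section PhaseKernel

open Classical

variable {ι : Type*} [Fintype ι] {A : Submodule (ZMod 2) (ι → ZMod 2)}
  (horth : ∀ y ∈ A, ∀ z ∈ A, binInner y z = 0)

noncomputable def phaseKernel (a : ι → ZMod 2) : Finset (ι → ZMod 2) :=
  (Finset.univ.filter (supportLE · a)).filter (phaseChar horth · = 0)

variable {a : ι → ZMod 2}

lemma card_submodule_zmod_two : Fintype.card A = 2 ^ Module.finrank (ZMod 2) A := by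
  simpa [ZMod.card] using Module.card_eq_pow_finrank (K := ZMod 2) (V := A)

-- Character orthogonality on the left, the weight enumerator on the right.
theorem two_pow_finrank_mul_sum_phaseKernel (hsupp : ∀ z ∈ A, supportLE z a)
    (t : ℂ) :
    2 ^ Module.finrank (ZMod 2) A * ∑ x ∈ phaseKernel horth a, t ^ wH x
      = ∑ z : A, Complex.I ^ wH (z : ι → ZMod 2)
          * ((1 + t) ^ wH (a + (z : ι → ZMod 2)) * (1 - t) ^ wH (z : ι → ZMod 2)) := by
  set F := Finset.univ.filter (supportLE · a)
  calc _ = ∑ x ∈ F, t ^ wH x * ∑ z : A, phaseChar horth x z := by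
        rw [phaseKernel, Finset.sum_filter, Finset.mul_sum]
        refine Finset.sum_congr rfl fun x _ => ?_
        rw [AddChar.sum_eq_ite, card_submodule_zmod_two]
        split_ifs <;> simp [mul_comm]
    _ = ∑ z : A, Complex.I ^ wH (z : ι → ZMod 2) * ∑ x ∈ F,
          t ^ wH x * (-1) ^ ∑ j, ((z : ι → ZMod 2) j).val * (x j).val := by
        simp only [Finset.mul_sum, phaseChar_apply]
        rw [Finset.sum_comm]
        refine Finset.sum_congr rfl fun z _ => Finset.sum_congr rfl fun x _ => ?_
        ring
    _ = _ := Finset.sum_congr rfl fun z _ => by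
        rw [sum_supportLE_pow_wH_mul_neg_one_pow (hsupp z z.2)]

lemma card_phaseKernel (hdim : 2 * Module.finrank (ZMod 2) A = wH a)
    (hsupp : ∀ z ∈ A, supportLE z a) :
    ((phaseKernel horth a).card : ℂ) = 2 ^ Module.finrank (ZMod 2) A := by
  have h := two_pow_finrank_mul_sum_phaseKernel horth hsupp 1
  rw [Fintype.sum_eq_single 0 fun z hz => ?_] at h
  · simp only [one_pow, Finset.sum_const, nsmul_eq_mul, mul_one, Submodule.coe_zero, add_zero,
      wH_eq_zero_iff.2 rfl, pow_zero, one_mul, ← hdim, pow_mul', one_add_one_eq_two, sq] at h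
    exact mul_left_cancel₀ (pow_ne_zero _ two_ne_zero) h
  · have : wH (z : ι → ZMod 2) ≠ 0 := wH_eq_zero_iff.not.2 (by simpa using hz)
    simp [this]

lemma sum_phaseKernel_I_pow (hdim : 2 * Module.finrank (ZMod 2) A = wH a)
    (hsupp : ∀ z ∈ A, supportLE z a) :
    ∑ x ∈ phaseKernel horth a, Complex.I ^ wH x
      = (phaseKernel horth a).card * Complex.I ^ Module.finrank (ZMod 2) A := by
  have hterm (z : A) : Complex.I ^ wH (z : ι → ZMod 2) * ((1 + Complex.I) ^ wH (a + (z : ι → ZMod 2))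
      * (1 - Complex.I) ^ wH (z : ι → ZMod 2)) = (2 * Complex.I) ^ Module.finrank (ZMod 2) A := by
    rw [mul_left_comm, ← mul_pow, show Complex.I * (1 - Complex.I) = 1 + Complex.I by
      linear_combination -Complex.I_sq, ← pow_add, wH_add_add_wH_of_supportLE (hsupp z z.2), ← hdim,
      pow_mul, show (1 + Complex.I) ^ 2 = 2 * Complex.I by linear_combination Complex.I_sq]
  have h := two_pow_finrank_mul_sum_phaseKernel horth hsupp Complex.I
  rw [Finset.sum_congr rfl fun z _ => hterm z, Finset.sum_const, Finset.card_univ,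
    card_submodule_zmod_two, nsmul_eq_mul, mul_pow] at h
  push_cast at h
  rw [card_phaseKernel horth hdim hsupp]
  exact mul_left_cancel₀ (pow_ne_zero _ two_ne_zero) h

lemma mul_mem_phaseKernel (hsupp : ∀ z ∈ A, supportLE z a) {x : ι → ZMod 2}
    (hx : ∀ z ∈ A, Complex.I ^ wH z * (-1) ^ ∑ j, (z j).val * (x j).val = 1) :
    a * x ∈ phaseKernel horth a := by
  have hle : ∀ c d : ZMod 2, c * d = 1 → c = 1 := by decide
  simp only [phaseKernel, Finset.mem_filter, Finset.mem_univ, true_and]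
  refine ⟨fun j hj => hle _ _ hj, ?_⟩
  ext z
  rw [phaseChar_apply, sum_val_mul_mul_right_of_supportLE (hsupp z z.2), hx z z.2,
    AddChar.zero_apply]

end PhaseKernel

theorem I_pow_wH_mul_eq_I_pow_finrank {ι : Type*} [Fintype ι] {a x : ι → ZMod 2}
    {A : Submodule (ZMod 2) (ι → ZMod 2)} (hdim : 2 * Module.finrank (ZMod 2) A = wH a)
    (hsupp : ∀ z ∈ A, supportLE z a) (horth : ∀ y ∈ A, ∀ z ∈ A, binInner y z = 0)
    (hx : ∀ z ∈ A, Complex.I ^ wH z * (-1) ^ ∑ j, (z j).val * (x j).val = 1) :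
    Complex.I ^ wH (a * x) = Complex.I ^ Module.finrank (ZMod 2) A :=
  Complex.eq_of_sum_eq_card_mul (by simp) (by simp) (sum_phaseKernel_I_pow horth hdim hsupp) _
    (mul_mem_phaseKernel horth hsupp hx)

lemma Finset.mul_sum_self_eq_sum_self {R : Type*} [Semiring R] {S : Finset R}
    (hmul : ∀ g ∈ S, ∀ h ∈ S, g * h ∈ S) {h : R} (hh : h ∈ S) (hinv : h * h = 1) :
    h * ∑ g ∈ S, g = ∑ g ∈ S, g := by
  rw [Finset.mul_sum]
  exact Finset.sum_nbij' (h * ·) (h * ·) (fun g hg => hmul h hh g hg) (fun g hg => hmul h hh g hg)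
    (fun g _ => by rw [← mul_assoc, hinv, one_mul]) (fun g _ => by rw [← mul_assoc, hinv, one_mul])
    fun _ _ => rfl

lemma Matrix.eq_one_of_diagonal_mul_eq_self {m l R : Type*} [Fintype m] [DecidableEq m]
    [Semiring R] [IsRightCancelMulZero R] {d : m → R} {M : Matrix m l R}
    (h : diagonal d * M = M) {u : m} {v : l} (huv : M u v ≠ 0) : d u = 1 := by
  rw [← mul_eq_right₀ huv, ← diagonal_mul, h]

section Matrix

variable {n : ℕ}

lemma pauliE_zero_left (z : V n) :
    PauliE 0 z = diagonal fun x => (-1) ^ ∑ j, (z j).val * (x j).val := by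
  ext u v
  by_cases h : u = v <;> simp [PauliE, diagonal, h]

lemma I_pow_smul_pauliE_zero_left (z : V n) : Complex.I ^ wH z • PauliE 0 z
    = diagonal fun x => Complex.I ^ wH z * (-1) ^ ∑ j, (z j).val * (x j).val := by
  rw [pauliE_zero_left, ← diagonal_smul]
  rfl

lemma I_pow_smul_pauliE_zero_left_mul_self {z : V n} (hz : Even (wH z)) :
    (Complex.I ^ wH z • PauliE 0 z) * (Complex.I ^ wH z • PauliE 0 z) = 1 := by
  rw [I_pow_smul_pauliE_zero_left, diagonal_mul_diagonal, ← diagonal_one]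
  congr 1
  ext x
  rw [← sq, mul_pow, ← pow_mul, mul_comm (wH z), pow_mul, Complex.I_sq, hz.neg_one_pow, one_mul,
    ← pow_mul, mul_comm _ 2, pow_mul, neg_one_sq, one_pow]

lemma exists_mem_apply_ne_zero_of_stabProj_apply_ne_zero {S : Finset (Matrix (V n) (V n) ℂ)}
    {u v : V n} (h : stabProj S u v ≠ 0) : ∃ g ∈ S, g u v ≠ 0 := by
  by_contra! hS
  exact h (by simp [stabProj, Matrix.sum_apply, Finset.sum_eq_zero hS])

lemma I_pow_mul_neg_one_pow_eq_one_of_stabProj_apply_ne_zero {S : Finset (Matrix (V n) (V n) ℂ)}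
    (hmul : ∀ g ∈ S, ∀ h ∈ S, g * h ∈ S) {z : V n} (hz : Complex.I ^ wH z • PauliE 0 z ∈ S)
    (heven : Even (wH z)) {u v : V n} (huv : stabProj S u v ≠ 0) :
    Complex.I ^ wH z * (-1) ^ ∑ j, (z j).val * (u j).val = 1 := by
  have hfix := Finset.mul_sum_self_eq_sum_self hmul hz (I_pow_smul_pauliE_zero_left_mul_self heven)
  rw [I_pow_smul_pauliE_zero_left] at hfix
  have hproj : (diagonal fun x => Complex.I ^ wH z * (-1) ^ ∑ j, (z j).val * (x j).val)
      * stabProj S = stabProj S := by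
    rw [stabProj, mul_smul_comm, hfix]
  exact Matrix.eq_one_of_diagonal_mul_eq_self hproj huv

lemma add_eq_of_pauliE_apply_ne_zero {a b u v : V n} (h : PauliE a b u v ≠ 0) : u + a = v := by
  by_contra hne
  refine h ?_
  have : u ≠ v + a := fun hu => hne (by ext j; simp [hu, add_assoc, CharTwo.add_self_eq_zero])
  simp [PauliE, this]

theorem transT_mul_mul_conjTranspose_eq_self {M : Matrix (V n) (V n) ℂ}
    (h : ∀ u v, M u v ≠ 0 → wH u ≡ wH v [MOD 8]) : transT n * M * (transT n)ᴴ = M := by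
  set ω := Complex.exp (Real.pi * Complex.I / 4)
  have hω : IsPrimitiveRoot ω 8 := by
    convert Complex.isPrimitiveRoot_exp 8 (by norm_num) using 2
    push_cast
    ring
  have hωω : ω * (starRingEnd ℂ) ω = 1 := by
    rw [Complex.mul_conj', hω.norm'_eq_one (by norm_num)]
    norm_num
  have hT : transT n = diagonal fun x => ω ^ wH x := rfl
  ext u v
  rw [hT, diagonal_conjTranspose, mul_diagonal, diagonal_mul, Pi.star_apply, star_pow]
  by_cases huv : M u v = 0
  · simp [huv]
  rw [(hω.isOfFinOrder (by norm_num)).pow_eq_pow_iff_modEq.2 (hω.eq_orderOf ▸ h u v huv),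
    mul_right_comm, ← mul_pow, Complex.star_def, hωω, one_pow, one_mul]

end Matrix

theorem stabilizer_transversalT_sufficient_general (n : ℕ)
    (S : Finset (Matrix (V n) (V n) ℂ))
    (hS : IsStabilizer n S)
    (h2 : ∀ (a b : V n) (ε : ℂ), IsSign ε → ε • PauliE a b ∈ S → a ≠ 0 →
      ∃ A : Submodule (ZMod 2) (V n),
        2 * Module.finrank (ZMod 2) A = wH a ∧
        (∀ z ∈ A, supportLE z a) ∧
        (∀ y ∈ A, ∀ z ∈ A, binInner y z = 0) ∧
        (∀ z ∈ A, (Complex.I ^ wH z) • PauliE 0 z ∈ S)) :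
    transT n * stabProj S * (transT n)ᴴ = stabProj S := by
  obtain ⟨-, hpauli, hmul, -, -⟩ := hS
  refine transT_mul_mul_conjTranspose_eq_self fun u v huv => ?_
  obtain ⟨g, hg, hguv⟩ := exists_mem_apply_ne_zero_of_stabProj_apply_ne_zero huv
  obtain ⟨ε, a, b, hε, rfl⟩ := hpauli g hg
  have hv : u + a = v := add_eq_of_pauliE_apply_ne_zero (b := b) fun h => hguv (by simp [h])
  rcases eq_or_ne a 0 with rfl | ha
  · rw [← hv, add_zero]
  obtain ⟨A, hdim, hsupp, horth, hA⟩ := h2 a b ε hε hg ha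
  have hphase : ∀ z ∈ A, Complex.I ^ wH z * (-1) ^ ∑ j, (z j).val * (u j).val = 1 :=
    fun z hz => I_pow_mul_neg_one_pow_eq_one_of_stabProj_apply_ne_zero hmul (hA z hz)
      (even_wH_of_binInner_self_eq_zero (horth z hz z hz)) huv
  have hmod4 : wH (a * u) ≡ Module.finrank (ZMod 2) A [MOD 4] := by
    rw [Complex.isPrimitiveRoot_I.eq_orderOf, ← (Complex.isPrimitiveRoot_I.isOfFinOrder
      (by norm_num)).pow_eq_pow_iff_modEq]
    exact I_pow_wH_mul_eq_I_pow_finrank hdim hsupp horth hphase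
  have hweight := wH_add_add_two_mul_wH_mul u a
  rw [hv, mul_comm u a] at hweight
  unfold Nat.ModEq at hmod4 ⊢
  omega

/-- (Converse direction.) If every element `ε_j E(a_j,b_j)` of a stabilizer
group `S` with `2^r` elements has even `w_H(a_j)`, and for every element with `a_j ≠ 0`
there is a linear subspace `A_j` of dimension `w_H(a_j)/2`, supported on `a_j`,
self-orthogonal, with `i^{w_H(z)} E(0,z) ∈ S` for every `z ∈ A_j`, then
`T^{⊗n} Π_S (T^{⊗n})† = Π_S`, i.e. transversal `T` preserves the code space. -/
theorem stabilizer_transversalT_sufficient (n r : ℕ)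
    (S : Finset (Matrix (V n) (V n) ℂ))
    (hS : IsStabilizer n S) (hcard : S.card = 2 ^ r)
    (h1 : ∀ (a b : V n) (ε : ℂ), IsSign ε → ε • PauliE a b ∈ S → Even (wH a))
    (h2 : ∀ (a b : V n) (ε : ℂ), IsSign ε → ε • PauliE a b ∈ S → a ≠ 0 →
      ∃ A : Submodule (ZMod 2) (V n),
        2 * Module.finrank (ZMod 2) A = wH a ∧
        (∀ z ∈ A, supportLE z a) ∧
        (∀ y ∈ A, ∀ z ∈ A, binInner y z = 0) ∧
        (∀ z ∈ A, (Complex.I ^ wH z) • PauliE 0 z ∈ S)) :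
    transT n * stabProj S * (transT n)ᴴ = stabProj S :=
  stabilizer_transversalT_sufficient_general n S hS h2
end

section
/- Let x ∈ F_2^n and let C_x ⊆ F_2^n be a binary linear code with dim C_x = w_H(x)/2 such that every z ∈ C_x satisfies z ⪯ x and y z^T = 0 for all y, z ∈ C_x (a self-dual code supported on x). Then x ∈ C_x. Consequently, for any CSS-T pair (C1, C2) one has C2 ⊆ C1^⊥. -/
open Matrix BigOperators

/-!
Restricting to the coordinates in `supp x` turns `C_x` into a self-orthogonal code whose
dimension is half its length; such a code is its own dual. The restriction of `x` is the
all-ones word `1`, and over `𝔽₂` one has `⟨1, c⟩ = ⟨c, c⟩`, which vanishes on a self-orthogonal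
code. Hence `1` lies in the dual, that is, in the restricted code, and `x ∈ C_x` because
restriction is injective on words supported on `x`.
-/

open Module

theorem LinearMap.BilinForm.orthogonal_eq_self_of_le_orthogonal {K V : Type*} [Field K]
    [AddCommGroup V] [Module K V] [FiniteDimensional K V] {B : LinearMap.BilinForm K V}
    (hB : B.Nondegenerate) {W : Submodule K V} (hW : W ≤ B.orthogonal W)
    (hdim : 2 * finrank K W = finrank K V) : B.orthogonal W = W :=
  (Submodule.eq_of_le_of_finrank_le hW (by rw [finrank_orthogonal hB]; omega)).symm

section Binary

variable {ι : Type*}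

theorem binInner_one_eq_binInner_self [Fintype ι] (c : ι → ZMod 2) :
    binInner c 1 = binInner c c := by
  have hsq : ∀ a : ZMod 2, a * 1 = a * a := by decide
  simp only [binInner, Pi.one_apply, hsq]

theorem one_mem_of_selfOrthogonal [Fintype ι] [DecidableEq ι]
    (C : Submodule (ZMod 2) (ι → ZMod 2)) (horth : ∀ y ∈ C, ∀ z ∈ C, binInner y z = 0)
    (hdim : 2 * finrank (ZMod 2) C = Fintype.card ι) : 1 ∈ C := by
  set B := (1 : Matrix ι ι (ZMod 2)).toBilin'
  have hB : B.Nondegenerate := (Matrix.nondegenerate_of_det_ne_zero (by simp)).toBilin'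
  have hB_apply : ∀ y z, B y z = binInner y z := fun y z => by
    simp [B, Matrix.toBilin'_apply', binInner, dotProduct]
  have hself : C ≤ B.orthogonal C := fun z hz =>
    LinearMap.BilinForm.mem_orthogonal_iff.mpr fun y hy => (hB_apply y z).trans (horth y hy z hz)
  rw [← LinearMap.BilinForm.orthogonal_eq_self_of_le_orthogonal hB hself
    (by rwa [finrank_fintype_fun_eq_card])]
  refine LinearMap.BilinForm.mem_orthogonal_iff.mpr fun c hc => ?_
  rw [hB_apply, binInner_one_eq_binInner_self]
  exact horth c hc c hc

def restrictSupport (x : ι → ZMod 2) : (ι → ZMod 2) →ₗ[ZMod 2] ({j // x j = 1} → ZMod 2) :=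
  LinearMap.funLeft (ZMod 2) (ZMod 2) Subtype.val

variable {x y z : ι → ZMod 2}

theorem eq_zero_of_supportLE (h : supportLE y x) {j : ι} (hj : x j ≠ 1) : y j = 0 := by
  have : ∀ a : ZMod 2, a ≠ 1 → a = 0 := by decide
  exact this _ fun hy => hj (h j hy)

theorem restrictSupport_self : restrictSupport x x = 1 := funext fun j => j.2

theorem binInner_restrictSupport [Fintype ι] (h : supportLE y x) :
    binInner (restrictSupport x y) (restrictSupport x z) = binInner y z := by
  change ∑ j : {j // x j = 1}, y j * z j = ∑ j, y j * z j
  rw [(Finset.sum_subtype (Finset.univ.filter fun j => x j = 1) (by simp) fun j => y j * z j).symm,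
    Finset.sum_filter_of_ne]
  intro j _ hj
  by_contra hxj
  exact hj (by rw [eq_zero_of_supportLE h hxj, zero_mul])

theorem eq_of_restrictSupport_eq (hy : supportLE y x) (hz : supportLE z x)
    (h : restrictSupport x y = restrictSupport x z) : y = z := by
  funext j
  by_cases hxj : x j = 1
  · exact congrFun h ⟨j, hxj⟩
  · rw [eq_zero_of_supportLE hy hxj, eq_zero_of_supportLE hz hxj]

theorem card_support_eq_wH [Fintype ι] (x : ι → ZMod 2) : Fintype.card {j // x j = 1} = wH x := by
  rw [Fintype.card_subtype]
  rfl

theorem mem_of_selfOrthogonal_supportLE [Fintype ι] [DecidableEq ι]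
    (Cx : Submodule (ZMod 2) (ι → ZMod 2)) (hdim : 2 * finrank (ZMod 2) Cx = wH x)
    (hsupp : ∀ z ∈ Cx, supportLE z x)
    (horth : ∀ y ∈ Cx, ∀ z ∈ Cx, binInner y z = 0) : x ∈ Cx := by
  have hinj : Function.Injective (restrictSupport x ∘ₗ Cx.subtype) := fun y z h =>
    Subtype.ext (eq_of_restrictSupport_eq (hsupp y y.2) (hsupp z z.2) h)
  have hfinrank : finrank (ZMod 2) (Cx.map (restrictSupport x)) = finrank (ZMod 2) Cx := by
    rw [← LinearMap.finrank_range_of_inj hinj, LinearMap.range_comp, Submodule.range_subtype]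
  have hone : 1 ∈ Cx.map (restrictSupport x) := by
    refine one_mem_of_selfOrthogonal _ ?_ (by rw [hfinrank, hdim, card_support_eq_wH])
    rintro _ ⟨y, hy, rfl⟩ _ ⟨z, hz, rfl⟩
    rw [binInner_restrictSupport (hsupp y hy)]
    exact horth y hy z hz
  obtain ⟨y, hy, hyx⟩ := hone
  rwa [eq_of_restrictSupport_eq (hsupp y hy) (fun _ h => h)
    (hyx.trans restrictSupport_self.symm)] at hy

end Binary

/-- If `C_x ⊆ F₂ⁿ` is a self-dual code supported on `x` (every `z ∈ C_x`
satisfies `z ⪯ x`, all inner products vanish, and `dim C_x = w_H(x)/2`), then `x ∈ C_x`.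
Consequently, for any CSS-T pair `(C₁, C₂)` one has `C₂ ⊆ C₁^⊥`. -/
theorem mem_selfdual_supported_and_csst_subset_dual (n : ℕ) :
    (∀ (x : V n) (Cx : Submodule (ZMod 2) (V n)),
        2 * Module.finrank (ZMod 2) Cx = wH x →
        (∀ z ∈ Cx, supportLE z x) →
        (∀ y ∈ Cx, ∀ z ∈ Cx, binInner y z = 0) →
        x ∈ Cx) ∧
    (∀ C₁ C₂ : Submodule (ZMod 2) (V n), CSST C₁ C₂ → C₂ ≤ dualCode C₁) := by
  refine ⟨fun x Cx => mem_of_selfOrthogonal_supportLE Cx, ?_⟩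
  rintro C₁ C₂ ⟨-, -, hCx⟩ x hx
  obtain ⟨Cx, hCx_dual, hdim, hsupp, horth⟩ := hCx x hx
  exact hCx_dual (mem_of_selfOrthogonal_supportLE Cx hdim hsupp horth)
end
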